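/- Let q = 2^t and let F : 𝔽₂ⁿ → ℤ_q^m be a vectorial gbent function with m = n/(2t). Then the set R = {(x, F(x)) : x ∈ 𝔽₂ⁿ} is a (2^n, 2^{n/2}, 2^n, 2^{n/2})-relative difference set in the abelian group 𝔽₂ⁿ × ℤ_q^m relative to the subgroup N = {0} × ℤ_q^m; that is, every element of (𝔽₂ⁿ × ℤ_q^m) ∖ N can be written in exactly 2^{n/2} ways as a difference r₁ − r₂ with r₁, r₂ ∈ R, and no nonzero element of N has such a representation. -/

import Mathlib

/-!
Write `ψ` for the standard character of `ℤ_q`, so that `ζ_q ^ f(x) = ψ (f x)`. For a gbent `f`,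
the Wiener–Khinchin identity `Σ_u |H_f(u)|² (-1)^⟨u,a⟩ = 2ⁿ Σ_y ψ (f (y + a) - f y)`, combined
with `|H_f(u)|² = 2ⁿ` and orthogonality of the characters of `𝔽₂ⁿ`, shows that the
autocorrelation of `f` vanishes at every shift `a ≠ 0`.

The representations of `(a, b)` as a difference of elements of `R` correspond to the solutions
`y` of `F (y + a) - F y = b`. Counting these by orthogonality of the characters of `ℤ_q^m`, the
trivial character contributes `2ⁿ` and every other character `c` contributes the autocorrelation
of the component `c · F`, which vanishes when `a ≠ 0`. So there are `2ⁿ / q^m = 2^{n/2}`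
solutions; when `a = 0` and `b ≠ 0` there are none.
-/

open scoped BigOperators

/-- `ζ_q = e^{2πi/q}`. -/
noncomputable def zeta (q : ℕ) : ℂ := Complex.exp (2 * Real.pi * Complex.I / q)

/-- The standard inner product `⟨u,x⟩ = Σᵢ uᵢxᵢ` on `𝔽₂ⁿ`. -/
def ip {n : ℕ} (u x : Fin n → ZMod 2) : ZMod 2 := ∑ i, u i * x i

/-- The generalized Walsh–Hadamard transform
`H_f(u) = Σ_x ζ_q^{f(x)} (−1)^{⟨u,x⟩}` of `f : 𝔽₂ⁿ → ℤ_q`. -/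
noncomputable def gWHT {n q : ℕ} (f : (Fin n → ZMod 2) → ZMod q) (u : Fin n → ZMod 2) : ℂ :=
  ∑ x : Fin n → ZMod 2, zeta q ^ (f x).val * (-1 : ℂ) ^ (ip u x).val

/-- `f` is gbent if `|H_f(u)| = 2^{n/2}` for all `u`. -/
def IsGbent {n q : ℕ} (f : (Fin n → ZMod 2) → ZMod q) : Prop :=
  ∀ u, ‖gWHT f u‖ = (2 : ℝ) ^ ((n : ℝ) / 2)

/-- `g` is the dual of `f`: `H_f(u) = 2^{n/2} ζ_q^{g(u)}` for all `u`. -/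
def IsDualOf {n q : ℕ} (g f : (Fin n → ZMod 2) → ZMod q) : Prop :=
  ∀ u, gWHT f u = ((2 : ℝ) ^ ((n : ℝ) / 2) : ℝ) * zeta q ^ (g u).val

/-- `f` is a regular gbent function:
`H_f(u) = 2^{n/2} ζ_q^{j_u}` for some `j_u ∈ ℤ_q`, for every `u`. -/
def IsRegularGbent {n q : ℕ} (f : (Fin n → ZMod 2) → ZMod q) : Prop :=
  IsGbent f ∧ ∀ u, ∃ j : ZMod q, gWHT f u = ((2 : ℝ) ^ ((n : ℝ) / 2) : ℝ) * zeta q ^ j.val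

/-- The orthogonal complement of a subspace `U ⊆ 𝔽₂ⁿ` w.r.t. `⟨·,·⟩`. -/
def orthComp {n : ℕ} (U : Submodule (ZMod 2) (Fin n → ZMod 2)) : Set (Fin n → ZMod 2) :=
  {u | ∀ x ∈ U, ip u x = 0}

/-- `F : 𝔽₂ⁿ → ℤ_q^m` is vectorial gbent if every component function
`c·F`, `c ≠ 0`, is gbent. -/
def IsVectorialGbent {n q m : ℕ} (F : (Fin n → ZMod 2) → Fin m → ZMod q) : Prop :=
  ∀ c : Fin m → ZMod q, c ≠ 0 → IsGbent (fun x => ∑ j, c j * F x j)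

open Finset ZMod
open scoped ComplexConjugate

lemma zeta_pow_val_eq_stdAddChar {q : ℕ} [NeZero q] (a : ZMod q) :
    zeta q ^ a.val = stdAddChar a := by
  rw [stdAddChar_apply, toCircle_apply, zeta, ← Complex.exp_nat_mul]
  congr 1
  ring

lemma neg_one_pow_val_eq_stdAddChar (a : ZMod 2) : (-1 : ℂ) ^ a.val = stdAddChar a := by
  have hζ : zeta 2 = -1 := by
    rw [zeta, ← Complex.exp_pi_mul_I]
    congr 1
    push_cast
    ring
  rw [← zeta_pow_val_eq_stdAddChar, hζ]

lemma gWHT_eq_sum_stdAddChar {n q : ℕ} [NeZero q] (f : (Fin n → ZMod 2) → ZMod q)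
    (u : Fin n → ZMod 2) : gWHT f u = ∑ x, stdAddChar (f x) * stdAddChar (u ⬝ᵥ x) := by
  simp only [gWHT, zeta_pow_val_eq_stdAddChar, neg_one_pow_val_eq_stdAddChar]
  rfl

lemma AddChar.map_sum_eq_prod {A M α : Type*} [AddCommMonoid A] [CommMonoid M] (ψ : AddChar A M)
    (s : Finset α) (f : α → A) : ψ (∑ i ∈ s, f i) = ∏ i ∈ s, ψ (f i) := by
  classical
  induction s using Finset.induction_on with
  | empty => simp
  | insert i s hi ih => rw [sum_insert hi, prod_insert hi, ψ.map_add_eq_mul, ih]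

section DotProductCharacters

variable {ι : Type*} [Fintype ι] [DecidableEq ι] {N : ℕ} [NeZero N]

lemma sum_stdAddChar_dotProduct (e : ι → ZMod N) :
    ∑ c : ι → ZMod N, stdAddChar (c ⬝ᵥ e) = if e = 0 then (N : ℂ) ^ Fintype.card ι else 0 := by
  simp_rw [dotProduct, AddChar.map_sum_eq_prod]
  rw [← Fintype.prod_sum fun i (c : ZMod N) => stdAddChar (c * e i)]
  simp only [AddChar.sum_mulShift _ (isPrimitive_stdAddChar N), Nat.cast_ite, Nat.cast_zero,
    ZMod.card, prod_ite_zero, prod_const, card_univ, mem_univ, forall_const, funext_iff,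
    Pi.zero_apply]

-- Wiener–Khinchin for the Fourier transform on `(ℤ_N)^ι`.
lemma sum_norm_sq_fourier_mul_stdAddChar (g : (ι → ZMod N) → ℂ) (a : ι → ZMod N) :
    ∑ u : ι → ZMod N, (‖∑ x, g x * stdAddChar (u ⬝ᵥ x)‖ ^ 2 : ℂ) * stdAddChar (-(u ⬝ᵥ a)) =
      N ^ Fintype.card ι * ∑ y, g (y + a) * conj (g y) := by
  have hexpand : ∀ u : ι → ZMod N,
      (‖∑ x, g x * stdAddChar (u ⬝ᵥ x)‖ ^ 2 : ℂ) * stdAddChar (-(u ⬝ᵥ a)) =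
        ∑ y, ∑ x, g x * conj (g y) * stdAddChar (u ⬝ᵥ (x - (y + a))) := by
    intro u
    rw [← Complex.mul_conj', map_sum, sum_mul_sum, sum_comm, sum_mul]
    refine sum_congr rfl fun y _ => sum_mul _ _ _ |>.trans <| sum_congr rfl fun x _ => ?_
    simp only [map_mul, ← AddChar.map_neg_eq_conj, dotProduct_add, dotProduct_neg, sub_eq_add_neg,
      neg_add, AddChar.map_add_eq_mul]
    ring
  simp_rw [hexpand]
  rw [sum_comm, mul_sum]
  refine sum_congr rfl fun y _ => sum_comm.trans ?_
  simp_rw [← mul_sum, sum_stdAddChar_dotProduct, sub_eq_zero, mul_ite, mul_zero, sum_ite_eq',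
    mem_univ, if_true]
  ring

end DotProductCharacters

lemma IsGbent.sum_stdAddChar_sub_shift_eq_zero {n q : ℕ} [NeZero q]
    {f : (Fin n → ZMod 2) → ZMod q} (hf : IsGbent f) {a : Fin n → ZMod 2} (ha : a ≠ 0) :
    ∑ y, stdAddChar (f (y + a) - f y) = 0 := by
  have hpow : ((2 : ℝ) ^ ((n : ℝ) / 2)) ^ 2 = 2 ^ n := by
    rw [← Real.rpow_mul_natCast zero_le_two]
    norm_num
  have hsq : ∀ u, ((‖gWHT f u‖ : ℂ) ^ 2) = 2 ^ n := fun u => by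
    rw [hf u]
    exact_mod_cast hpow
  have h := sum_norm_sq_fourier_mul_stdAddChar (fun x => stdAddChar (f x)) a
  simp only [← gWHT_eq_sum_stdAddChar, hsq, ← mul_sum, ← dotProduct_neg,
    sum_stdAddChar_dotProduct, neg_eq_zero, if_neg ha, mul_zero, Fintype.card_fin,
    ← AddChar.map_neg_eq_conj, ← AddChar.map_add_eq_mul, ← sub_eq_add_neg] at h
  exact (mul_eq_zero.mp h.symm).resolve_left (by norm_num)

lemma IsVectorialGbent.pow_mul_card_shift_sub_eq {n q m : ℕ} [NeZero q]
    {F : (Fin n → ZMod 2) → Fin m → ZMod q} (hF : IsVectorialGbent F)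
    {a : Fin n → ZMod 2} (ha : a ≠ 0) (b : Fin m → ZMod q) :
    q ^ m * #{y | F (y + a) - F y = b} = 2 ^ n := by
  have hcomponent : ∀ c : Fin m → ZMod q,
      ∑ y, stdAddChar (c ⬝ᵥ (F (y + a) - F y - b)) = if c = 0 then 2 ^ n else 0 := by
    intro c
    split_ifs with hc
    · simp [hc, ZMod.card]
    · have h0 : ∑ y, stdAddChar (c ⬝ᵥ F (y + a) - c ⬝ᵥ F y) = 0 :=
        (hF c hc).sum_stdAddChar_sub_shift_eq_zero ha
      have hsplit : ∀ y, stdAddChar (c ⬝ᵥ (F (y + a) - F y - b)) =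
          stdAddChar (c ⬝ᵥ F (y + a) - c ⬝ᵥ F y) / stdAddChar (c ⬝ᵥ b) := fun y => by
        rw [dotProduct_sub, dotProduct_sub, AddChar.map_sub_eq_div]
      simp only [hsplit, ← sum_div, h0, zero_div]
  have hcount : ((q ^ m * #{y | F (y + a) - F y = b} : ℕ) : ℂ) =
      ∑ y, ∑ c, stdAddChar (c ⬝ᵥ (F (y + a) - F y - b)) := by
    simp only [sum_stdAddChar_dotProduct, sub_eq_zero, Fintype.card_fin, sum_ite, sum_const_zero,
      add_zero, sum_const, nsmul_eq_mul]
    push_cast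
    ring
  rw [sum_comm] at hcount
  simp only [hcomponent, sum_ite_eq', mem_univ, if_true] at hcount
  exact_mod_cast hcount

lemma card_graph_sub_eq {G H : Type*} [AddCommGroup G] [Fintype G] [DecidableEq G] [AddGroup H]
    [DecidableEq H] (F : G → H) (a : G) (b : H) :
    #{p : G × G | ((p.1, F p.1) : G × H) - (p.2, F p.2) = (a, b)} = #{y | F (y + a) - F y = b} := by
  refine card_nbij' Prod.snd (fun y => (y + a, y)) ?_ ?_ ?_ ?_
  · rintro ⟨x, y⟩ h
    simp only [coe_filter, mem_univ, true_and, Set.mem_ofPred_eq, Prod.mk_sub_mk, Prod.mk.injEq,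
      sub_eq_iff_eq_add'] at h ⊢
    exact h.1 ▸ h.2
  · intro y h
    simpa using h
  · rintro ⟨x, y⟩ h
    simp only [coe_filter, mem_univ, true_and, Set.mem_ofPred_eq, Prod.mk_sub_mk, Prod.mk.injEq,
      sub_eq_iff_eq_add'] at h
    simp [h.1]
  · intro y _
    rfl

theorem stmt14_general (n t m : ℕ) (hn : n = 2 * t * m)
    (F : (Fin n → ZMod 2) → Fin m → ZMod (2 ^ t))
    (hF : IsVectorialGbent F) :
    (Finset.univ.image (fun x : Fin n → ZMod 2 => (x, F x))).card = 2 ^ n ∧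
    (∀ g : (Fin n → ZMod 2) × (Fin m → ZMod (2 ^ t)), g.1 ≠ 0 →
      (Finset.univ.filter (fun p : (Fin n → ZMod 2) × (Fin n → ZMod 2) =>
        ((p.1, F p.1) : (Fin n → ZMod 2) × (Fin m → ZMod (2 ^ t))) - (p.2, F p.2) = g)).card
        = 2 ^ (n / 2)) ∧
    (∀ g : (Fin n → ZMod 2) × (Fin m → ZMod (2 ^ t)), g.1 = 0 → g ≠ 0 →
      (Finset.univ.filter (fun p : (Fin n → ZMod 2) × (Fin n → ZMod 2) =>
        ((p.1, F p.1) : (Fin n → ZMod 2) × (Fin m → ZMod (2 ^ t))) - (p.2, F p.2) = g)).card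
        = 0) := by
  have hhalf : n / 2 = t * m := by rw [hn, mul_assoc, Nat.mul_div_cancel_left _ two_pos]
  refine ⟨?_, ?_, ?_⟩
  · rw [card_image_of_injective _ fun x y h => congrArg Prod.fst h]
    simp [ZMod.card]
  · rintro ⟨a, b⟩ (ha : a ≠ 0)
    have hpow : (2 ^ t) ^ m * 2 ^ (t * m) = 2 ^ n := by
      rw [hn, ← pow_mul, ← pow_add]
      ring_nf
    rw [card_graph_sub_eq, hhalf]
    exact Nat.eq_of_mul_eq_mul_left (by positivity)
      ((hF.pow_mul_card_shift_sub_eq ha b).trans hpow.symm)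
  · rintro ⟨a, b⟩ (rfl : a = 0) hg
    have hb : b ≠ 0 := fun h => hg (Prod.ext rfl h)
    rw [card_graph_sub_eq, card_eq_zero, filter_eq_empty_iff]
    intro y _
    simpa using hb.symm

/-- if `F : 𝔽₂ⁿ → ℤ_{2^t}^m` is vectorial gbent with `m = n/(2t)`,
then `R = {(x, F(x))}` is a `(2^n, 2^{n/2}, 2^n, 2^{n/2})`-relative difference
set in `𝔽₂ⁿ × ℤ_{2^t}^m` relative to `N = {0} × ℤ_{2^t}^m`: `|R| = 2^n`, every
element outside `N` has exactly `2^{n/2}` representations as a difference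
`r₁ − r₂` of elements of `R`, and no nonzero element of `N` has any. -/
theorem stmt14 (n t m : ℕ) (ht : 1 ≤ t) (hm : 1 ≤ m) (hn : n = 2 * t * m)
    (F : (Fin n → ZMod 2) → Fin m → ZMod (2 ^ t))
    (hF : IsVectorialGbent F) :
    (Finset.univ.image (fun x : Fin n → ZMod 2 => (x, F x))).card = 2 ^ n ∧
    (∀ g : (Fin n → ZMod 2) × (Fin m → ZMod (2 ^ t)), g.1 ≠ 0 →
      (Finset.univ.filter (fun p : (Fin n → ZMod 2) × (Fin n → ZMod 2) =>
        ((p.1, F p.1) : (Fin n → ZMod 2) × (Fin m → ZMod (2 ^ t))) - (p.2, F p.2) = g)).card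
        = 2 ^ (n / 2)) ∧
    (∀ g : (Fin n → ZMod 2) × (Fin m → ZMod (2 ^ t)), g.1 = 0 → g ≠ 0 →
      (Finset.univ.filter (fun p : (Fin n → ZMod 2) × (Fin n → ZMod 2) =>
        ((p.1, F p.1) : (Fin n → ZMod 2) × (Fin m → ZMod (2 ^ t))) - (p.2, F p.2) = g)).card
        = 0) :=
  stmt14_general n t m hn F hF
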